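/- arXiv:1908.02415 — 6 statements merged into one kernel-verified Lean document; each statement's English description precedes it below -/
import Mathlib

section
/- Let n, r be natural numbers with 1 ≤ r and 2r − 1 ≤ n, let A = {0, 1, …, r−1} viewed as a subset of ZMod n, and for s ∈ ZMod n let s + A = {s + a : a ∈ A}. Then: (i) exactly one s ∈ ZMod n (namely s = 0) satisfies |(s + A) ∩ A| = r; (ii) for every k with 1 ≤ k ≤ r − 1, exactly two elements s ∈ ZMod n satisfy |(s + A) ∩ A| = k; (iii) exactly n − 2r + 1 elements s ∈ ZMod n satisfy (s + A) ∩ A = ∅. -/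
/-!
Translation by `s` is injective, so `|(s + A) ∩ A|` counts the `a < r` with `s + a ∈ A`.
Writing `m = s.val < n`, these are the `a < r - m` (no wrap-around) and the `n - m ≤ a < r`
(wrap-around), so the overlap is `(r - m) + (m + r - n)`. When `2r - 1 ≤ n` at most one of the
two terms is nonzero: the overlap is `r` only at `m = 0`, equals `k ∈ [1, r - 1]` exactly at
`m = r - k` and `m = n - r + k`, and vanishes exactly for `r ≤ m ≤ n - r`.
-/

open Finset

theorem Finset.card_image_inter_of_injective {α β : Type*} [DecidableEq β] {f : α → β}
    (hf : Function.Injective f) (s : Finset α) (t : Finset β) :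
    #(s.image f ∩ t) = #{a ∈ s | f a ∈ t} := by
  rw [← filter_mem_eq_inter, filter_image, card_image_of_injective _ hf]

theorem Nat.card_filter_range_lt_and_add_mod_lt {n r m : ℕ} (hr : r ≤ n) (hm : m < n) :
    #{a ∈ range n | a < r ∧ (m + a) % n < r} = (r - m) + (m + r - n) := by
  have hsplit : {a ∈ range n | a < r ∧ (m + a) % n < r} = range (r - m) ∪ Ico (n - m) r := by
    ext a
    simp only [mem_filter, mem_range, mem_union, mem_Ico]
    by_cases ha : a < n
    · rw [Nat.add_mod_eq_ite, Nat.mod_eq_of_lt hm, Nat.mod_eq_of_lt ha]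
      split_ifs <;> omega
    · omega
  rw [hsplit, card_union_of_disjoint, card_range, card_Ico]
  · omega
  · exact disjoint_left.2 fun a ha ha' => by simp only [mem_range, mem_Ico] at ha ha'; omega

namespace ZMod

variable {n : ℕ} [NeZero n]

theorem card_filter_val (p : ℕ → Prop) [DecidablePred p] :
    #{x : ZMod n | p x.val} = #{m ∈ range n | p m} := by
  refine card_nbij' val (Nat.cast : ℕ → ZMod n) ?_ ?_ ?_ ?_
  · intro x hx
    simp_all [ZMod.val_lt]
  · intro m hm
    simp_all [Nat.mod_eq_of_lt]
  · intro x _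
    exact natCast_zmod_val x
  · intro m hm
    simp_all [Nat.mod_eq_of_lt]

theorem image_natCast_range (r : ℕ) :
    (range r).image (Nat.cast : ℕ → ZMod n) = univ.filter (fun x : ZMod n => x.val < r) := by
  ext x
  simp only [mem_image, mem_range, mem_filter, mem_univ, true_and]
  constructor
  · rintro ⟨a, ha, rfl⟩
    rw [val_natCast]
    exact (Nat.mod_le a n).trans_lt ha
  · exact fun hx => ⟨x.val, hx, natCast_zmod_val x⟩

theorem card_add_image_natCast_range_inter {r : ℕ} (hr : r ≤ n) (s : ZMod n) :
    #(((range r).image (Nat.cast : ℕ → ZMod n)).image (fun a => s + a) ∩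
        (range r).image (Nat.cast : ℕ → ZMod n)) = (r - s.val) + (s.val + r - n) := by
  rw [card_image_inter_of_injective (add_right_injective s), image_natCast_range, filter_filter]
  simp only [mem_filter, mem_univ, true_and, val_add]
  rw [card_filter_val (fun m => m < r ∧ (s.val + m) % n < r)]
  exact Nat.card_filter_range_lt_and_add_mod_lt hr s.val_lt

end ZMod

/-- Let `1 ≤ r`, `2r - 1 ≤ n`, and `A = {0, …, r-1} ⊆ ZMod n`. Then:
(i) exactly one `s` (namely `s = 0`) satisfies `|(s + A) ∩ A| = r`;
(ii) for every `1 ≤ k ≤ r - 1`, exactly two `s` satisfy `|(s + A) ∩ A| = k`;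
(iii) exactly `n - 2r + 1` elements `s` satisfy `(s + A) ∩ A = ∅`. -/
theorem round_robin_overlap_distribution (n r : ℕ) [NeZero n] (hr : 1 ≤ r)
    (hrn : 2 * r - 1 ≤ n) :
    (Finset.univ.filter (fun s : ZMod n =>
        (((Finset.range r).image (Nat.cast : ℕ → ZMod n)).image (fun a => s + a) ∩
            (Finset.range r).image (Nat.cast : ℕ → ZMod n)).card = r) = {0}) ∧
    (∀ k : ℕ, 1 ≤ k → k ≤ r - 1 →
      (Finset.univ.filter (fun s : ZMod n =>
          (((Finset.range r).image (Nat.cast : ℕ → ZMod n)).image (fun a => s + a) ∩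
              (Finset.range r).image (Nat.cast : ℕ → ZMod n)).card = k)).card = 2) ∧
    ((Finset.univ.filter (fun s : ZMod n =>
        ((Finset.range r).image (Nat.cast : ℕ → ZMod n)).image (fun a => s + a) ∩
            (Finset.range r).image (Nat.cast : ℕ → ZMod n) = ∅)).card : ℤ) =
      (n : ℤ) - 2 * r + 1 := by
  have overlap := ZMod.card_add_image_natCast_range_inter (n := n) (r := r) (by omega)
  refine ⟨?_, fun k hk1 hk2 => ?_, ?_⟩
  · ext s
    simp only [mem_filter, mem_univ, true_and, mem_singleton, overlap, ← ZMod.val_eq_zero]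
    have := s.val_lt
    omega
  · simp only [overlap]
    rw [ZMod.card_filter_val (fun m => r - m + (m + r - n) = k)]
    have hk : {m ∈ range n | r - m + (m + r - n) = k} = {r - k, n - r + k} := by
      ext m
      simp only [mem_filter, mem_range, mem_insert, mem_singleton]
      omega
    rw [hk, card_pair (by omega)]
  · simp only [← card_eq_zero, overlap]
    rw [ZMod.card_filter_val (fun m => r - m + (m + r - n) = 0)]
    have h0 : {m ∈ range n | r - m + (m + r - n) = 0} = Icc r (n - r) := by
      ext m
      simp only [mem_filter, mem_range, mem_Icc]
      omega
    rw [h0, Nat.card_Icc]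
    omega
end

section
/- Let n, r be natural numbers with 1 ≤ r and 2r − 1 ≤ n, and let A = {0, 1, …, r−1} viewed as a subset of ZMod n. Then 3 · Σ_{s ∈ ZMod n} |(s + A) ∩ A|² = 2r³ + r. (This yields the redundancy diversity factor of round-robin scheduling: E[X²] → (2r³ + r)/(3n) as T → ∞, i.e., RDF_round-robin = 3n/(2r³ + r).) -/
/-!
The sum `∑ s, |(s + A) ∩ A|²` counts the quadruples `(a, b, a', b') ∈ A⁴` with `b - a = b' - a'`,
so it is the additive energy of `A`. As `2r - 1 ≤ n`, sums of two elements of `{0, …, r - 1}` do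
not wrap around modulo `n`, so reduction modulo `n` is a Freiman isomorphism of order 2 and the
energy can be computed in `ℕ`: there `t` has `min (t + 1) (2r - 1 - t)` representations as a sum
of two elements of `range r`, and the squares of these counts add up to `(2r³ + r) / 3`.
-/

open Finset
open scoped Pointwise Combinatorics.Additive

namespace Finset

lemma sum_card_vadd_inter_sq {G : Type*} [AddGroup G] [Fintype G] [DecidableEq G]
    (A B : Finset G) : ∑ s : G, #((s +ᵥ A) ∩ B) ^ 2 = E[A, -B] := by
  simp_rw [card_vadd_inter, addEnergy_eq_sum_sq, card_add_eq]
  exact Fintype.sum_equiv (Equiv.neg G) _ _ fun _ => rfl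

lemma addEnergy_neg_right {G : Type*} [AddCommGroup G] [DecidableEq G] (s t : Finset G) :
    E[s, -t] = E[s, t] := by
  refine card_nbij' (fun x => (x.1, -x.2.2, -x.2.1)) (fun x => (x.1, -x.2.2, -x.2.1))
    ?_ ?_ (fun _ _ => by simp) (fun _ _ => by simp)
  all_goals
    rintro ⟨⟨a₁, a₂⟩, b₁, b₂⟩
    simp only [coe_filter, mem_product, mem_neg', neg_neg, Set.mem_ofPred_eq]
    rintro ⟨⟨⟨ha₁, ha₂⟩, hb₁, hb₂⟩, h⟩
    refine ⟨⟨⟨ha₁, ha₂⟩, hb₂, hb₁⟩, ?_⟩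
    rwa [← sub_eq_add_neg, ← sub_eq_add_neg, sub_eq_sub_iff_add_eq_add]

lemma addEnergy_eq_of_isAddFreimanIso {α β : Type*} [AddCommMonoid α] [AddCommMonoid β]
    [DecidableEq α] [DecidableEq β] {s : Finset α} {t : Finset β} {f : α → β}
    (hf : IsAddFreimanIso 2 (s : Set α) (t : Set β) f) : E[t] = E[s] := by
  symm
  refine card_nbij (fun x => ((f x.1.1, f x.1.2), f x.2.1, f x.2.2)) ?_ ?_ ?_
  · rintro ⟨⟨a₁, a₂⟩, b₁, b₂⟩
    simp only [coe_filter, mem_product, Set.mem_ofPred_eq]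
    rintro ⟨⟨⟨ha₁, ha₂⟩, hb₁, hb₂⟩, h⟩
    exact ⟨⟨⟨hf.bijOn.mapsTo ha₁, hf.bijOn.mapsTo ha₂⟩, hf.bijOn.mapsTo hb₁, hf.bijOn.mapsTo hb₂⟩,
      (hf.add_eq_add ha₁ hb₁ ha₂ hb₂).2 h⟩
  · rintro ⟨⟨a₁, a₂⟩, b₁, b₂⟩ ha ⟨⟨a₁', a₂'⟩, b₁', b₂'⟩ ha' h
    simp only [coe_filter, mem_product, Set.mem_ofPred_eq] at ha ha'
    simp only [Prod.mk.injEq] at h ⊢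
    have inj := hf.bijOn.injOn
    exact ⟨⟨inj ha.1.1.1 ha'.1.1.1 h.1.1, inj ha.1.1.2 ha'.1.1.2 h.1.2⟩,
      inj ha.1.2.1 ha'.1.2.1 h.2.1, inj ha.1.2.2 ha'.1.2.2 h.2.2⟩
  · rintro ⟨⟨c₁, c₂⟩, d₁, d₂⟩
    simp only [coe_filter, mem_product, Set.mem_ofPred_eq]
    rintro ⟨⟨⟨hc₁, hc₂⟩, hd₁, hd₂⟩, h⟩
    obtain ⟨a₁, ha₁, rfl⟩ := hf.bijOn.surjOn hc₁
    obtain ⟨a₂, ha₂, rfl⟩ := hf.bijOn.surjOn hc₂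
    obtain ⟨b₁, hb₁, rfl⟩ := hf.bijOn.surjOn hd₁
    obtain ⟨b₂, hb₂, rfl⟩ := hf.bijOn.surjOn hd₂
    exact ⟨((a₁, a₂), b₁, b₂),
      ⟨⟨⟨ha₁, ha₂⟩, hb₁, hb₂⟩, (hf.add_eq_add ha₁ hb₁ ha₂ hb₂).1 h⟩, rfl⟩

lemma card_filter_add_eq_range_product (r t : ℕ) :
    #{x ∈ range r ×ˢ range r | x.1 + x.2 = t} = min (t + 1) (2 * r - 1 - t) := by
  rw [show min (t + 1) (2 * r - 1 - t) = min (t + 1) r - (t + 1 - r) by omega, ← Nat.card_Ico]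
  refine card_nbij' Prod.fst (fun a => (a, t - a)) ?_ ?_ ?_ fun _ _ => rfl
  · rintro ⟨a, b⟩
    simp only [coe_filter, mem_product, mem_range, coe_Ico, Set.mem_ofPred_eq, Set.mem_Ico]
    omega
  · intro a
    simp only [coe_filter, mem_product, mem_range, coe_Ico, Set.mem_ofPred_eq, Set.mem_Ico]
    omega
  · rintro ⟨a, b⟩
    simp only [coe_filter, mem_product, mem_range, Set.mem_ofPred_eq, Prod.mk.injEq, true_and]
    omega

lemma three_mul_sum_range_sq_add_succ_sq (r : ℕ) :
    3 * ∑ i ∈ range r, ((i + 1) ^ 2 + i ^ 2) = 2 * r ^ 3 + r := by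
  induction r with
  | zero => rfl
  | succ r ih => rw [sum_range_succ, mul_add, ih]; ring

lemma three_mul_addEnergy_range (r : ℕ) : 3 * E[range r] = 2 * r ^ 3 + r := by
  have hsumset : range r + range r ⊆ range (r + r) := by
    intro t ht
    obtain ⟨a, ha, b, hb, rfl⟩ := mem_add.1 ht
    simp only [mem_range] at ha hb ⊢
    omega
  have hsum :
      E[range r] = ∑ t ∈ range (r + r), #{x ∈ range r ×ˢ range r | x.1 + x.2 = t} ^ 2 := by
    rw [addEnergy_eq_sum_sq']
    refine sum_subset hsumset fun t _ ht => ?_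
    rw [card_eq_zero.2 (filter_eq_empty_iff.2 fun x hx h => ht (by
      rw [← h]; exact add_mem_add (mem_product.1 hx).1 (mem_product.1 hx).2)), zero_pow two_ne_zero]
  rw [hsum, ← three_mul_sum_range_sq_add_succ_sq r, sum_range_add, sum_add_distrib,
    ← sum_range_reflect (· ^ 2) r]
  -- The count is `i + 1` at `i < r` and `r - 1 - i` at `r + i`; reflection turns the latter
  -- into `i`.
  congr 2
  all_goals
    refine sum_congr rfl fun i hi => ?_
    rw [card_filter_add_eq_range_product]
    simp only [mem_range] at hi
    congr 1
    omega

end Finset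

lemma isAddFreimanIso_natCast_range {R : Type*} [AddCommMonoidWithOne R] [IsRightCancelAdd R]
    [DecidableEq R] (n : ℕ) [CharP R n] {r : ℕ} (hrn : 2 * r - 1 ≤ n) :
    IsAddFreimanIso 2 (range r : Set ℕ) ((range r).image (Nat.cast : ℕ → R) : Set R) Nat.cast := by
  have hinj := CharP.natCast_injOn_Iio R n
  rw [coe_image, isAddFreimanIso_two]
  refine ⟨(hinj.mono fun a ha => ?_).bijOn_image, fun a ha b hb c hc d hd => ?_⟩
  · simp only [coe_range, Set.mem_Iio] at ha ⊢
    omega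
  · simp only [coe_range, Set.mem_Iio] at ha hb hc hd
    rw [← Nat.cast_add, ← Nat.cast_add]
    exact ⟨fun h => hinj (by simp only [Set.mem_Iio]; omega) (by simp only [Set.mem_Iio]; omega) h,
      congrArg _⟩

theorem round_robin_total_squared_overlap_general (n r : ℕ) [NeZero n]
    (hrn : 2 * r - 1 ≤ n) :
    3 * ∑ s : ZMod n,
        (((Finset.range r).image (Nat.cast : ℕ → ZMod n)).image (fun a => s + a) ∩
            (Finset.range r).image (Nat.cast : ℕ → ZMod n)).card ^ 2 =
      2 * r ^ 3 + r := by
  set A := (range r).image (Nat.cast : ℕ → ZMod n)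
  calc 3 * ∑ s : ZMod n, #(A.image (fun a => s + a) ∩ A) ^ 2
      = 3 * E[A] := by rw [← addEnergy_neg_right, ← sum_card_vadd_inter_sq]; rfl
    _ = 3 * E[range r] := by
      rw [addEnergy_eq_of_isAddFreimanIso (isAddFreimanIso_natCast_range n hrn)]
    _ = 2 * r ^ 3 + r := three_mul_addEnergy_range r

/-- Let `1 ≤ r`, `2r - 1 ≤ n`, and `A = {0, …, r-1} ⊆ ZMod n`. Then
`3 · Σ_{s ∈ ZMod n} |(s + A) ∩ A|² = 2r³ + r`.
(This yields `RDF_round-robin = 3n/(2r³ + r)`.) -/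
theorem round_robin_total_squared_overlap (n r : ℕ) [NeZero n] (hr : 1 ≤ r)
    (hrn : 2 * r - 1 ≤ n) :
    3 * ∑ s : ZMod n,
        (((Finset.range r).image (Nat.cast : ℕ → ZMod n)).image (fun a => s + a) ∩
            (Finset.range r).image (Nat.cast : ℕ → ZMod n)).card ^ 2 =
      2 * r ^ 3 + r :=
  round_robin_total_squared_overlap_general n r hrn
end

section
/- Let n, r, T be positive natural numbers with r ≤ n, gcd(r, n) = 1 and n dividing T. For 0 ≤ i < T let S_i = {(i·r + j) mod n : 0 ≤ j < r} be the round-robin server set of job i. Then n · Σ_{i=1}^{T−1} |S_i ∩ S_0| = T·r² − n·r; equivalently, the total overlap of the T − 1 later jobs with the initial job equals (T/n)·r² − r. -/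
/-!
Since `r ≤ n`, `S_0 = {0, …, r-1}` and `j ↦ (i r + j) mod n` is injective on it, so `|S_i ∩ S_0|`
counts the `j < r` with `(i r + j) mod n < r`. Exchanging the sums, for fixed `j` the map
`i ↦ (i r + j) mod n` permutes the residues modulo `n` because `r` is a unit there, so each of the
`T/n` blocks of `n` consecutive jobs contributes `r` for every `j`. The total over all `T` jobs is
therefore `(T/n) r²`, of which `r` is the overlap of the initial job with itself.
-/

open Finset Function

theorem Finset.card_image_inter_of_injOn {α β : Type*} [DecidableEq β] {s : Finset α}
    {t : Finset β} {f : α → β} (hf : Set.InjOn f s) :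
    #(s.image f ∩ t) = #{a ∈ s | f a ∈ t} := by
  rw [← filter_mem_eq_inter, filter_image, card_image_of_injOn (hf.mono (filter_subset _ s))]

namespace Nat

theorem count_mul_of_periodic {p : ℕ → Prop} [DecidablePred p] {n : ℕ} (hp : Periodic p n)
    (k : ℕ) : count p (n * k) = k * count p n := by
  induction k with
  | zero => simp
  | succ k ih =>
    have hshift : count (fun i => p (n * k + i)) n = count p n := by
      congr 1
      exact funext fun i => by rw [add_comm, mul_comm]; exact hp.nat_mul k i
    rw [mul_add_one, count_add, hshift, ih, add_one_mul]

theorem injOn_add_mod_range {n r : ℕ} (hrn : r ≤ n) (a : ℕ) :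
    Set.InjOn (fun j => (a + j) % n) (range r) := fun _ hx _ hy hxy =>
  (ModEq.add_left_cancel' a hxy).eq_of_lt_of_lt
    ((mem_range.1 hx).trans_le hrn) ((mem_range.1 hy).trans_le hrn)

theorem injOn_mul_add_mod_range {n r : ℕ} (hcop : Coprime r n) (j : ℕ) :
    Set.InjOn (fun i => (i * r + j) % n) (range n) := fun _ hx _ hy hxy =>
  ((ModEq.add_right_cancel' j hxy).cancel_right_of_coprime hcop.symm).eq_of_lt_of_lt
    (mem_range.1 hx) (mem_range.1 hy)

theorem count_mul_add_mod_lt {n r : ℕ} (hcop : Coprime r n) (hrn : r ≤ n) (j : ℕ) :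
    count (fun i => (i * r + j) % n < r) n = r := by
  have himage : (range n).image (fun i => (i * r + j) % n) = range n := by
    refine Finset.eq_of_subset_of_card_le ?_
      (Finset.card_image_of_injOn (injOn_mul_add_mod_range hcop j)).ge
    rintro _ hx
    obtain ⟨i, hi, rfl⟩ := mem_image.1 hx
    exact mem_range.2 (mod_lt _ (zero_lt_of_lt (mem_range.1 hi)))
  rw [count_eq_card_filter_range]
  simp_rw [← mem_range (n := r)]
  rw [← card_image_inter_of_injOn (injOn_mul_add_mod_range hcop j), himage, range_inter_range,
    min_eq_right hrn, card_range]

end Nat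

def roundRobinServers (n r i : ℕ) : Finset ℕ :=
  (range r).image (fun j => (i * r + j) % n)

theorem roundRobinServers_zero {n r : ℕ} (hrn : r ≤ n) : roundRobinServers n r 0 = range r := by
  calc roundRobinServers n r 0 = (range r).image id := image_congr fun j hj => by
        simpa using Nat.mod_eq_of_lt ((mem_range.1 hj).trans_le hrn)
    _ = range r := image_id

theorem card_roundRobinServers_inter_zero {n r : ℕ} (hrn : r ≤ n) (i : ℕ) :
    #(roundRobinServers n r i ∩ roundRobinServers n r 0) =
      #{j ∈ range r | (i * r + j) % n < r} := by
  rw [roundRobinServers_zero hrn, roundRobinServers, card_image_inter_of_injOn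
    (Nat.injOn_add_mod_range hrn _)]
  simp only [mem_range]

theorem sum_card_roundRobinServers_inter_zero {n r : ℕ} (hcop : Nat.Coprime r n) (hrn : r ≤ n)
    (k : ℕ) :
    ∑ i ∈ range (n * k), #(roundRobinServers n r i ∩ roundRobinServers n r 0) = k * r ^ 2 := by
  have hperiodic (j : ℕ) : Periodic (fun i => (i * r + j) % n < r) n := fun i => by
    simp only [add_mul, add_right_comm _ (n * r), Nat.add_mul_mod_self_left]
  simp_rw [card_roundRobinServers_inter_zero hrn]
  rw [show ∑ i ∈ range (n * k), #{j ∈ range r | (i * r + j) % n < r}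
      = ∑ j ∈ range r, #{i ∈ range (n * k) | (i * r + j) % n < r} from
    sum_card_bipartiteAbove_eq_sum_card_bipartiteBelow _]
  simp_rw [← Nat.count_eq_card_filter_range, Nat.count_mul_of_periodic (hperiodic _),
    Nat.count_mul_add_mod_lt hcop hrn]
  simp only [sum_const, card_range, smul_eq_mul]
  ring

theorem round_robin_total_overlap_with_initial_general (n r T : ℕ)
    (hT : 0 < T) (hrn : r ≤ n) (hgcd : Nat.gcd r n = 1) (hdvd : n ∣ T) :
    (n : ℤ) * ∑ i ∈ Finset.Ico 1 T,
        (((Finset.range r).image (fun j => (i * r + j) % n) ∩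
            (Finset.range r).image (fun j => (0 * r + j) % n)).card : ℤ) =
      (T : ℤ) * r ^ 2 - n * r := by
  obtain ⟨k, rfl⟩ := hdvd
  have htotal := sum_card_roundRobinServers_inter_zero hgcd hrn k
  have hinitial : #(roundRobinServers n r 0 ∩ roundRobinServers n r 0) = r := by
    rw [inter_self, roundRobinServers_zero hrn, card_range]
  rw [range_eq_Ico, sum_eq_sum_Ico_succ_bot hT, hinitial, zero_add] at htotal
  have hcast : (r : ℤ) + ∑ i ∈ Ico 1 (n * k),
      (#(roundRobinServers n r i ∩ roundRobinServers n r 0) : ℤ) = k * r ^ 2 := by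
    exact_mod_cast htotal
  unfold roundRobinServers at hcast
  push_cast
  linear_combination (n : ℤ) * hcast

/-- Round-robin server sets `S_i = {(i*r + j) mod n : 0 ≤ j < r}` with `r ≤ n`,
`gcd(r, n) = 1` and `n ∣ T`. Then `n * Σ_{i=1}^{T-1} |S_i ∩ S_0| = T*r² - n*r`. -/
theorem round_robin_total_overlap_with_initial (n r T : ℕ) (hn : 0 < n) (hr : 0 < r)
    (hT : 0 < T) (hrn : r ≤ n) (hgcd : Nat.gcd r n = 1) (hdvd : n ∣ T) :
    (n : ℤ) * ∑ i ∈ Finset.Ico 1 T,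
        (((Finset.range r).image (fun j => (i * r + j) % n) ∩
            (Finset.range r).image (fun j => (0 * r + j) % n)).card : ℤ) =
      (T : ℤ) * r ^ 2 - n * r :=
  round_robin_total_overlap_with_initial_general n r T hT hrn hgcd hdvd
end

section
/- Let n, r, T be positive natural numbers with 2r − 1 ≤ n, gcd(r, n) = 1 and n dividing T. For 0 ≤ i < T let S_i = {(i·r + j) mod n : 0 ≤ j < r} be the round-robin server set of job i. Then 3n · Σ_{i=1}^{T−1} |S_i ∩ S_0|² = T·(2r³ + r) − 3n·r²; equivalently, the total squared overlap of the T − 1 later jobs with the initial job equals (T/n)·(2r³ + r)/3 − r². -/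
/-!
Job `i` occupies the cyclic interval of length `r` starting at `b = i r mod n`, which meets
`S_0 = [0, r)` in `(r - b)₊ + (b + r - n)₊` points; the bound `2r - 1 ≤ n` keeps the two pieces
apart. Since `r` is invertible mod `n`, the starts `b` of every block of `n` consecutive jobs run
through all residues, so each block contributes `∑_{k ≤ r} k² + ∑_{k < r} k² = (2r³ + r)/3`,
and the job `i = 0` itself contributes `r²`.
-/

open Finset Function

def cyclicInterval (n a r : ℕ) : Finset ℕ :=
  (range r).image fun j => (a + j) % n

section CyclicInterval

variable {n a r x : ℕ}

lemma cyclicInterval_mod_left : cyclicInterval n (a % n) r = cyclicInterval n a r := by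
  simp only [cyclicInterval, Nat.mod_add_mod]

lemma cyclicInterval_zero_left (hr : r ≤ n) : cyclicInterval n 0 r = range r := by
  ext x
  simp only [cyclicInterval, mem_image, mem_range, zero_add]
  constructor
  · rintro ⟨j, hj, rfl⟩
    exact (Nat.mod_le j n).trans_lt hj
  · exact fun hx => ⟨x, hx, Nat.mod_eq_of_lt (by omega)⟩

lemma mem_cyclicInterval (ha : a < n) (hr : r ≤ n) :
    x ∈ cyclicInterval n a r ↔ x < n ∧ (a ≤ x ∧ x < a + r ∨ x + n < a + r) := by
  simp only [cyclicInterval, mem_image, mem_range]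
  constructor
  · rintro ⟨j, hj, rfl⟩
    rcases lt_or_ge (a + j) n with hlt | hge
    · rw [Nat.mod_eq_of_lt hlt]
      omega
    · rw [Nat.mod_eq_sub_mod hge, Nat.mod_eq_of_lt (by omega)]
      omega
  · rintro ⟨hxn, ⟨hax, hxr⟩ | hwrap⟩
    · exact ⟨x - a, by omega, by rw [Nat.add_sub_cancel' hax, Nat.mod_eq_of_lt hxn]⟩
    · refine ⟨x + n - a, by omega, ?_⟩
      rw [show a + (x + n - a) = x + n by omega, Nat.add_mod_right, Nat.mod_eq_of_lt hxn]

lemma cyclicInterval_inter_range (ha : a < n) (hr : r ≤ n) :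
    cyclicInterval n a r ∩ range r = Ico a r ∪ range (a + r - n) := by
  ext x
  simp only [mem_inter, mem_cyclicInterval ha hr, mem_union, mem_Ico, mem_range]
  omega

lemma card_cyclicInterval_inter_range (ha : a < n) (h : 2 * r - 1 ≤ n) :
    #(cyclicInterval n a r ∩ range r) = (r - a) + (a + r - n) := by
  rw [cyclicInterval_inter_range ha (by omega), card_union_of_disjoint, Nat.card_Ico, card_range]
  exact disjoint_left.2 fun x hx hx' => by simp only [mem_Ico, mem_range] at hx hx'; omega

end CyclicInterval

lemma six_mul_sum_range_add_one_sq (m : ℕ) :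
    6 * ∑ k ∈ range m, (k + 1) ^ 2 = m * (m + 1) * (2 * m + 1) := by
  induction m with
  | zero => rfl
  | succ m ih => rw [sum_range_succ, mul_add, ih]; ring

lemma sum_range_tsub_sq {m n : ℕ} (h : m ≤ n) :
    ∑ b ∈ range n, (m - b) ^ 2 = ∑ k ∈ range m, (k + 1) ^ 2 := by
  obtain ⟨d, rfl⟩ := Nat.exists_eq_add_of_le h
  rw [sum_range_add, sum_eq_zero (s := range d) (fun b _ => by simp), add_zero, ← sum_range_reflect]
  exact sum_congr rfl fun k hk => by rw [mem_range] at hk; congr 1; omega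

lemma sum_range_add_tsub_sq_add_sq {r n : ℕ} (h : r ≤ n) :
    ∑ b ∈ range n, (b + r - n) ^ 2 + r ^ 2 = ∑ b ∈ range n, (r - b) ^ 2 := by
  have hreflect : ∑ b ∈ range n, (b + r - n) ^ 2 = ∑ b ∈ range n, (r - (b + 1)) ^ 2 := by
    rw [← sum_range_reflect]
    exact sum_congr rfl fun b hb => by rw [mem_range] at hb; congr 1; omega
  have hshift := sum_range_succ' (fun b => (r - b) ^ 2) n
  rw [sum_range_succ, Nat.sub_eq_zero_of_le h] at hshift
  simpa [hreflect] using hshift.symm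

lemma three_mul_sum_range_overlap_sq {r n : ℕ} (h : 2 * r - 1 ≤ n) :
    3 * ∑ b ∈ range n, ((r - b) + (b + r - n)) ^ 2 = 2 * r ^ 3 + r := by
  have hsq : ∀ b, ((r - b) + (b + r - n)) ^ 2 = (r - b) ^ 2 + (b + r - n) ^ 2 := fun b => by
    have hcross : (r - b) * (b + r - n) = 0 := by
      rcases Nat.lt_or_ge b r with hb | hb
      · rw [Nat.sub_eq_zero_of_le (by omega : b + r ≤ n), mul_zero]
      · rw [Nat.sub_eq_zero_of_le hb, zero_mul]
    rw [add_sq, mul_assoc, hcross, mul_zero, add_zero]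
  have hA := six_mul_sum_range_add_one_sq r
  have hB := sum_range_add_tsub_sq_add_sq (r := r) (n := n) (by omega)
  rw [← sum_range_tsub_sq (n := n) (by omega)] at hA
  simp only [hsq, sum_add_distrib]
  linarith

lemma Function.Periodic.sum_range_mul {M : Type*} [AddCommMonoid M] {f : ℕ → M} {n : ℕ}
    (hf : Periodic f n) (m : ℕ) : ∑ i ∈ range (n * m), f i = m • ∑ i ∈ range n, f i := by
  induction m with
  | zero => simp
  | succ m ih =>
    rw [mul_add_one, sum_range_add, ih, succ_nsmul]
    congr 1
    exact sum_congr rfl fun i _ => by rw [add_comm, mul_comm]; simpa using hf.nat_mul m i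

lemma sum_range_mul_mod_of_coprime {M : Type*} [AddCommMonoid M] {r n : ℕ} (h : r.Coprime n)
    (f : ℕ → M) : ∑ i ∈ range n, f (i * r % n) = ∑ i ∈ range n, f i := by
  have hmaps : Set.MapsTo (fun i => i * r % n) (range n) (range n) := fun i hi => by
    simp only [coe_range, Set.mem_Iio] at hi ⊢
    exact Nat.mod_lt _ (by omega)
  have hinj : Set.InjOn (fun i => i * r % n) (range n) := fun i hi j hj hij => by
    simp only [coe_range, Set.mem_Iio] at hi hj
    exact (Nat.ModEq.cancel_right_of_coprime (Nat.coprime_comm.1 h) hij).eq_of_lt_of_lt hi hj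
  exact sum_nbij _ hmaps hinj (surjOn_of_injOn_of_card_le _ hmaps hinj le_rfl) fun _ _ => rfl

theorem round_robin_total_squared_overlap_with_initial_general (n r T : ℕ)
    (hT : 0 < T) (hrn : 2 * r - 1 ≤ n) (hgcd : Nat.gcd r n = 1)
    (hdvd : n ∣ T) :
    3 * (n : ℤ) * ∑ i ∈ Finset.Ico 1 T,
        (((Finset.range r).image (fun j => (i * r + j) % n) ∩
            (Finset.range r).image (fun j => (0 * r + j) % n)).card : ℤ) ^ 2 =
      (T : ℤ) * (2 * r ^ 3 + r) - 3 * n * r ^ 2 := by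
  obtain ⟨m, rfl⟩ := hdvd
  have hn : 0 < n := Nat.pos_of_mul_pos_right hT
  set f : ℕ → ℕ := fun i => #(cyclicInterval n (i * r) r ∩ range r) ^ 2 with hf_def
  have hf_periodic : Periodic f n := fun i => by
    simp only [hf_def]
    rw [← cyclicInterval_mod_left, add_mul, Nat.add_mul_mod_self_left, cyclicInterval_mod_left]
  have hf_eq : ∀ i, f i = ((r - i * r % n) + (i * r % n + r - n)) ^ 2 := fun i => by
    simp only [hf_def]
    rw [← cyclicInterval_mod_left, card_cyclicInterval_inter_range (Nat.mod_lt _ hn) hrn]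
  have hsum : ∑ i ∈ range (n * m), f i = m * ∑ b ∈ range n, ((r - b) + (b + r - n)) ^ 2 := by
    rw [hf_periodic.sum_range_mul, smul_eq_mul, sum_congr rfl fun i _ => hf_eq i,
      sum_range_mul_mod_of_coprime hgcd (fun b => ((r - b) + (b + r - n)) ^ 2)]
  have hsplit : ∑ i ∈ range (n * m), f i = r ^ 2 + ∑ i ∈ Ico 1 (n * m), f i := by
    rw [range_eq_Ico, sum_eq_sum_Ico_succ_bot hT, hf_def]
    simp only [zero_mul, cyclicInterval_zero_left (by omega : r ≤ n), inter_self, card_range]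
  have htotal := congrArg (Nat.cast : ℕ → ℤ) (hsplit.symm.trans hsum)
  have hperiod := congrArg (Nat.cast : ℕ → ℤ) (three_mul_sum_range_overlap_sq hrn)
  change 3 * (n : ℤ) * ∑ i ∈ Ico 1 (n * m),
      (#(cyclicInterval n (i * r) r ∩ cyclicInterval n (0 * r) r) : ℤ) ^ 2 = _
  rw [zero_mul, cyclicInterval_zero_left (by omega)]
  push_cast [hf_def] at htotal hperiod ⊢
  linear_combination (3 * (n : ℤ)) * htotal + (n * m : ℤ) * hperiod

/-- Round-robin server sets `S_i = {(i*r + j) mod n : 0 ≤ j < r}` with `2r - 1 ≤ n`,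
`gcd(r, n) = 1` and `n ∣ T`. Then
`3n * Σ_{i=1}^{T-1} |S_i ∩ S_0|² = T*(2r³ + r) - 3n*r²`. -/
theorem round_robin_total_squared_overlap_with_initial (n r T : ℕ) (hn : 0 < n)
    (hr : 0 < r) (hT : 0 < T) (hrn : 2 * r - 1 ≤ n) (hgcd : Nat.gcd r n = 1)
    (hdvd : n ∣ T) :
    3 * (n : ℤ) * ∑ i ∈ Finset.Ico 1 T,
        (((Finset.range r).image (fun j => (i * r + j) % n) ∩
            (Finset.range r).image (fun j => (0 * r + j) % n)).card : ℤ) ^ 2 =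
      (T : ℤ) * (2 * r ^ 3 + r) - 3 * n * r ^ 2 :=
  round_robin_total_squared_overlap_with_initial_general n r T hT hrn hgcd hdvd
end

section
/- Let r ≥ 2 and n = r(r−1) + 1. Let X be a finite set with |X| = n and let B be a finite family of subsets of X such that every member of B has exactly r elements and every pair of distinct points of X is contained in exactly one member of B. Then any two distinct blocks of B intersect in exactly one point. -/
/-!
Two blocks share at most one point, since a second common point would put a pair of points into
two blocks. Double counting the pairs `(y, b)` with `x, y ∈ b` and `y ≠ x` shows that every point
`x` lies in `(n - 1) / (r - 1) = r` blocks. If two blocks `b₁`, `b₂` were disjoint, a point `x` of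
`b₂` would be joined to the `r` points of `b₁` by `r` distinct blocks, none of them `b₂`, so `x`
would lie in at least `r + 1` blocks.
-/

open Finset

namespace BlockDesign

variable {α : Type*} [DecidableEq α]

/-- A linear space in the sense of incidence geometry, not a vector space. -/
structure IsLinearSpace (X : Finset α) (B : Finset (Finset α)) : Prop where
  subset : ∀ b ∈ B, b ⊆ X
  card_blocks_through_pair : ∀ x ∈ X, ∀ y ∈ X, x ≠ y → #{b ∈ B | x ∈ b ∧ y ∈ b} = 1

namespace IsLinearSpace

variable {X : Finset α} {B : Finset (Finset α)} {b c : Finset α} {x y : α}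

theorem exists_block (h : IsLinearSpace X B) (hx : x ∈ X) (hy : y ∈ X) (hxy : x ≠ y) :
    ∃ b ∈ B, x ∈ b ∧ y ∈ b := by
  obtain ⟨b, hb⟩ := card_eq_one.mp (h.card_blocks_through_pair x hx y hy hxy)
  exact ⟨b, mem_filter.mp (hb ▸ mem_singleton_self b)⟩

theorem eq_of_mem_of_mem (h : IsLinearSpace X B) (hb : b ∈ B) (hc : c ∈ B) (hxy : x ≠ y)
    (hxb : x ∈ b) (hyb : y ∈ b) (hxc : x ∈ c) (hyc : y ∈ c) : b = c :=
  card_le_one.mp (h.card_blocks_through_pair x (h.subset b hb hxb) y (h.subset b hb hyb) hxy).le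
    b (mem_filter.mpr ⟨hb, hxb, hyb⟩) c (mem_filter.mpr ⟨hc, hxc, hyc⟩)

theorem card_inter_le_one (h : IsLinearSpace X B) (hb : b ∈ B) (hc : c ∈ B) (hbc : b ≠ c) :
    #(b ∩ c) ≤ 1 :=
  card_le_one.mpr fun x hx y hy ↦ by_contra fun hxy ↦ by
    rw [mem_inter] at hx hy
    exact hbc (h.eq_of_mem_of_mem hb hc hxy hx.1 hy.1 hx.2 hy.2)

theorem card_blocks_through_mul (h : IsLinearSpace X B) {r : ℕ} (hsize : ∀ b ∈ B, #b = r)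
    (hx : x ∈ X) : #{b ∈ B | x ∈ b} * (r - 1) = #X - 1 := by
  have hcount := card_mul_eq_card_mul (fun y b ↦ y ∈ b) (s := X.erase x)
    (t := {b ∈ B | x ∈ b}) (m := 1) (n := r - 1)
    (fun y hy ↦ by
      rw [bipartiteAbove, filter_filter]
      exact h.card_blocks_through_pair x hx y (mem_of_mem_erase hy) (ne_of_mem_erase hy).symm)
    (fun b hb ↦ by
      obtain ⟨hb, hxb⟩ := mem_filter.mp hb
      have hbelow : (X.erase x).bipartiteBelow (fun y b ↦ y ∈ b) b = b.erase x := by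
        ext y
        simp only [mem_bipartiteBelow, mem_erase]
        exact ⟨fun ⟨⟨hyx, _⟩, hyb⟩ ↦ ⟨hyx, hyb⟩, fun ⟨hyx, hyb⟩ ↦ ⟨⟨hyx, h.subset b hb hyb⟩, hyb⟩⟩
      rw [hbelow, card_erase_of_mem hxb, hsize b hb])
  rw [card_erase_of_mem hx, mul_one] at hcount
  exact hcount.symm

theorem card_blocks_through (h : IsLinearSpace X B) {r : ℕ} (hsize : ∀ b ∈ B, #b = r)
    (hr : 2 ≤ r) (hX : #X = r * (r - 1) + 1) (hx : x ∈ X) : #{b ∈ B | x ∈ b} = r :=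
  Nat.eq_of_mul_eq_mul_right (m := r - 1) (by omega) <| by
    rw [h.card_blocks_through_mul hsize hx, hX, Nat.add_sub_cancel]

/-- The blocks through `x` meeting `b` are distinct, and none of them is the block `c`. -/
theorem card_lt_card_blocks_through (h : IsLinearSpace X B) (hb : b ∈ B) (hc : c ∈ B)
    (hxc : x ∈ c) (hbc : Disjoint b c) : #b < #{d ∈ B | x ∈ d} := by
  have hxb : x ∉ b := disjoint_right.mp hbc hxc
  calc #b ≤ #({d ∈ B | x ∈ d}.erase c) := by
        refine card_le_card_of_forall_subsingleton (fun y d ↦ y ∈ d) (fun y hy ↦ ?_) ?_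
        · obtain ⟨d, hd, hxd, hyd⟩ := h.exists_block (h.subset c hc hxc) (h.subset b hb hy)
            (fun hxy ↦ hxb (hxy ▸ hy))
          exact ⟨d, mem_erase.mpr ⟨fun hdc ↦ disjoint_left.mp hbc hy (hdc ▸ hyd),
            mem_filter.mpr ⟨hd, hxd⟩⟩, hyd⟩
        · intro d hd y₁ ⟨hy₁b, hy₁d⟩ y₂ ⟨hy₂b, hy₂d⟩
          obtain ⟨hd, hxd⟩ := mem_filter.mp (mem_of_mem_erase hd)
          by_contra hy
          exact hxb (h.eq_of_mem_of_mem hd hb hy hy₁d hy₂d hy₁b hy₂b ▸ hxd)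
    _ < #{d ∈ B | x ∈ d} := card_erase_lt_of_mem (mem_filter.mpr ⟨hc, hxc⟩)

end IsLinearSpace

end BlockDesign

/-- In a `(n, r, 1)`-BIBD with `r ≥ 2` and `n = r(r-1) + 1`, any two distinct blocks
intersect in exactly one point. -/
theorem bibd_blocks_intersect_in_one_point {α : Type*} [DecidableEq α] (r n : ℕ)
    (hr : 2 ≤ r) (hn : n = r * (r - 1) + 1) (X : Finset α) (hX : X.card = n)
    (B : Finset (Finset α)) (hsub : ∀ b ∈ B, b ⊆ X) (hsize : ∀ b ∈ B, b.card = r)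
    (hpair : ∀ x ∈ X, ∀ y ∈ X, x ≠ y →
      (B.filter (fun b => x ∈ b ∧ y ∈ b)).card = 1) :
    ∀ b₁ ∈ B, ∀ b₂ ∈ B, b₁ ≠ b₂ → (b₁ ∩ b₂).card = 1 := by
  have hB : BlockDesign.IsLinearSpace X B := ⟨hsub, hpair⟩
  intro b₁ hb₁ b₂ hb₂ hne
  refine le_antisymm (hB.card_inter_le_one hb₁ hb₂ hne) (card_pos.mpr ?_)
  rw [← not_disjoint_iff_nonempty_inter]
  intro hdisj
  obtain ⟨x, hx⟩ : b₂.Nonempty := card_pos.mp (by rw [hsize b₂ hb₂]; omega)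
  have hlt := hB.card_lt_card_blocks_through hb₁ hb₂ hx hdisj
  rw [hB.card_blocks_through hsize hr (hX.trans hn) (hsub b₂ hb₂ hx), hsize b₁ hb₁] at hlt
  exact lt_irrefl r hlt
end

section
/- For every natural number r ≥ 2, setting n = r(r−1) + 1, the inequality 3n/(r(2r² + 1)) ≤ n/(r(2r − 1)) holds (in the rationals), with equality if and only if r = 2; that is, the redundancy diversity factor of round-robin scheduling never exceeds that of BIBD scheduling: RDF_round-robin ≤ RDF_BIBD, with equality only for r = 2. -/
/-!
Both factors carry the common factor `n / r`, so the comparison reduces to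
`3 (2r - 1) ≤ 2r² + 1`. The gap is `2r² + 1 - 3 (2r - 1) = 2 (r - 1) (r - 2)`,
which is nonnegative for `r ≥ 2` and vanishes there only at `r = 2`.
-/

theorem mul_div_eq_div_iff {F : Type*} [Field F] {k a b c : F} (ha : a ≠ 0) (hb : b ≠ 0)
    (hc : c ≠ 0) : k * a / b = a / c ↔ k * c = b := by
  rw [div_eq_div_iff hb hc, mul_right_comm, mul_comm a b, mul_left_inj' ha]

section LinearOrderedField

variable {K : Type*} [Field K] [LinearOrder K] [IsStrictOrderedRing K]

theorem mul_div_le_div_iff {k a b c : K} (ha : 0 < a) (hb : 0 < b) (hc : 0 < c) :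
    k * a / b ≤ a / c ↔ k * c ≤ b := by
  rw [div_le_div_iff₀ hb hc, mul_right_comm, mul_comm a b, mul_le_mul_iff_left₀ ha]

theorem three_mul_mul_two_mul_sub_one_le {x : K} (hx : 2 ≤ x) :
    3 * (x * (2 * x - 1)) ≤ x * (2 * x ^ 2 + 1) := by
  have hgap : x * (2 * x ^ 2 + 1) - 3 * (x * (2 * x - 1)) = 2 * x * (x - 1) * (x - 2) := by
    ring
  have : 0 ≤ 2 * x * (x - 1) * (x - 2) := by
    have := sub_nonneg.2 hx
    have : 0 ≤ x - 1 := by linarith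
    positivity
  linarith

theorem three_mul_mul_two_mul_sub_one_eq_iff {x : K} (hx : 1 < x) :
    3 * (x * (2 * x - 1)) = x * (2 * x ^ 2 + 1) ↔ x = 2 := by
  constructor
  · intro h
    have hgap : 2 * x * (x - 1) * (x - 2) = 0 := by linear_combination -h
    have hx₀ : 2 * x * (x - 1) ≠ 0 := by
      have : 0 < x - 1 := sub_pos.2 hx
      have : 0 < x := by linarith
      positivity
    exact sub_eq_zero.1 ((mul_eq_zero.1 hgap).resolve_left hx₀)
  · rintro rfl
    norm_num

end LinearOrderedField

/-- For `r ≥ 2` and `n = r(r-1) + 1`, one has `3n/(r(2r² + 1)) ≤ n/(r(2r - 1))` in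
the rationals, with equality iff `r = 2`: `RDF_round-robin ≤ RDF_BIBD`, with equality
only for `r = 2`. -/
theorem rdf_round_robin_le_rdf_bibd (r n : ℕ) (hr : 2 ≤ r)
    (hn : n = r * (r - 1) + 1) :
    (3 * (n : ℚ)) / (r * (2 * r ^ 2 + 1)) ≤ (n : ℚ) / (r * (2 * r - 1)) ∧
      ((3 * (n : ℚ)) / (r * (2 * r ^ 2 + 1)) = (n : ℚ) / (r * (2 * r - 1)) ↔ r = 2) := by
  have hr' : (2 : ℚ) ≤ r := by exact_mod_cast hr
  have hn₀ : (0 : ℚ) < n := by rw [hn]; positivity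
  have hrr : (0 : ℚ) < r * (2 * r ^ 2 + 1) := by positivity
  have hbibd : (0 : ℚ) < r * (2 * r - 1) := mul_pos (by linarith) (by linarith)
  constructor
  · rw [mul_div_le_div_iff hn₀ hrr hbibd]
    exact three_mul_mul_two_mul_sub_one_le hr'
  · rw [mul_div_eq_div_iff hn₀.ne' hrr.ne' hbibd.ne',
      three_mul_mul_two_mul_sub_one_eq_iff (by linarith)]
    exact_mod_cast Iff.rfl
end
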